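/- Let ρ = (G_i)_{0 ≤ i ≤ n} be a 1-balanced execution of the reconfigurable broadcast network defined by a broadcast protocol P, and let κ = κ(ρ) be its total number of repeated atomic reconfigurations. Then for every N ∈ ℕ there exists a 1-constrained execution from G_1^N ⊕ G_{n−1}^{κN} to G_n^{N + κN}. -/

import Mathlib

/-!
Reconfigurable broadcast networks (Maubert–Pinchinat–Schlehuber-Caissier style
formalization of "Reconfiguration and message losses in parameterized broadcast networks").

A broadcast protocol is a tuple (Q, I, Σ, Δ); configurations are finite
Q-labelled simple graphs; steps are reconfiguration steps (labels unchanged,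
edges arbitrary) or communication steps (edges unchanged, one node broadcasts,
its neighbours receive); executions strictly alternate the two kinds of steps.
-/

namespace RBN

/-- An action of a broadcast protocol: broadcast `!!m` or reception `??m`. -/
inductive BAct (M : Type) where
  | brd : M → BAct M
  | rcv : M → BAct M

/-- A broadcast protocol `(Q, I, Σ, Δ)` with state space `Q` and message alphabet `M`:
initial states `init ⊆ Q` and transition relation `trans ⊆ Q × BAct M × Q`. -/
structure BroadcastProtocol (Q M : Type) where
  init : Set Q
  trans : Q → BAct M → Q → Prop

/-- A configuration: an undirected graph without self-loops on node set `V`,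
whose nodes are labelled by states in `Q`. -/
structure Config (V Q : Type) where
  graph : SimpleGraph V
  label : V → Q

/-- The distance `d(G, G')` between two configurations on the same node set with
the same labelling: the number of edges in the symmetric difference of the edge sets. -/
noncomputable def dist {V Q : Type} (G G' : Config V Q) : ℕ :=
  (symmDiff G.graph.edgeSet G'.graph.edgeSet).ncard

/-- The number of edges incident to node `v` in the symmetric difference of
the edge sets of `G` and `G'`. -/
noncomputable def localDist {V Q : Type} (v : V) (G G' : Config V Q) : ℕ :=
  {e ∈ symmDiff G.graph.edgeSet G'.graph.edgeSet | v ∈ e}.ncard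

/-- A reconfiguration step: labels are unchanged and edges may change arbitrarily. -/
def ReconfStep {V Q : Type} (G G' : Config V Q) : Prop :=
  G'.label = G.label

/-- A communication step: edges are unchanged, some node `v` broadcasts a message `m`
(performing a transition `(L v, !!m, L' v) ∈ Δ`), every neighbour `u` of `v` receives it
(performing `(L u, ??m, L' u) ∈ Δ`), and every other node keeps its label. -/
def CommStep {V Q M : Type} (P : BroadcastProtocol Q M) (G G' : Config V Q) : Prop :=
  G'.graph = G.graph ∧
  ∃ (v : V) (m : M),
    P.trans (G.label v) (.brd m) (G'.label v) ∧
    (∀ u, G.graph.Adj v u → P.trans (G.label u) (.rcv m) (G'.label u)) ∧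
    (∀ u, u ≠ v → ¬ G.graph.Adj v u → G'.label u = G.label u)

/-- The type of a step: communication or reconfiguration. -/
inductive StepType where
  | comm : StepType
  | reconf : StepType
deriving DecidableEq

/-- An execution of length `r` of the reconfigurable broadcast network defined by `P`,
with node set `V`: a sequence of configurations `cfg 0, …, cfg r` together with a
classification `ty` of each step, such that each step is of its declared kind and
communication and reconfiguration steps strictly alternate (reconfiguration steps
may be trivial). -/
structure Execution {Q M : Type} (V : Type) (P : BroadcastProtocol Q M) (r : ℕ) where
  cfg : ℕ → Config V Q
  ty : ℕ → StepType
  step_comm : ∀ i < r, ty i = .comm → CommStep P (cfg i) (cfg (i + 1))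
  step_reconf : ∀ i < r, ty i = .reconf → ReconfStep (cfg i) (cfg (i + 1))
  alternate : ∀ i, i + 1 < r → ty (i + 1) ≠ ty i

variable {Q M V : Type} {P : BroadcastProtocol Q M} {r : ℕ}

/-- An execution is initial if every node of its first configuration is labelled
by an initial state. -/
def Execution.Initial (ρ : Execution V P r) : Prop :=
  ∀ v, (ρ.cfg 0).label v ∈ P.init

/-- An execution synchronizes in `F` if every node of its last configuration is
labelled by a state in `F`. -/
def Execution.Synchronizes (ρ : Execution V P r) (F : Set Q) : Prop :=
  ∀ v, (ρ.cfg r).label v ∈ F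

/-- An execution is `k`-constrained if every reconfiguration step changes at most
`k` edges. -/
def Execution.KConstrained (k : ℕ) (ρ : Execution V P r) : Prop :=
  ∀ i < r, ρ.ty i = .reconf → dist (ρ.cfg i) (ρ.cfg (i + 1)) ≤ k

/-- An execution is strongly `k`-constrained if every reconfiguration step changes
exactly `k` edges. -/
def Execution.StronglyKConstrained (k : ℕ) (ρ : Execution V P r) : Prop :=
  ∀ i < r, ρ.ty i = .reconf → dist (ρ.cfg i) (ρ.cfg (i + 1)) = k

/-- An execution is `k`-locally-constrained if, at every step and for every node `v`,
at most `k` edges incident to `v` belong to the symmetric difference of the edge sets. -/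
def Execution.LocallyConstrained (k : ℕ) (ρ : Execution V P r) : Prop :=
  ∀ (v : V), ∀ i < r, localDist v (ρ.cfg i) (ρ.cfg (i + 1)) ≤ k

/-- An execution is `f`-constrained if every reconfiguration step changes at most
`f n` edges, where `n` is the number of nodes. -/
def Execution.FConstrained [Fintype V] (f : ℕ → ℕ) (ρ : Execution V P r) : Prop :=
  ∀ i < r, ρ.ty i = .reconf → dist (ρ.cfg i) (ρ.cfg (i + 1)) ≤ f (Fintype.card V)

/-- The number of communication steps of an execution. -/
def Execution.nbcomm (ρ : Execution V P r) : ℕ :=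
  ((Finset.range r).filter (fun i => ρ.ty i = StepType.comm)).card

/-- The total number of edge reconfigurations along an execution. -/
noncomputable def Execution.nbreconfig (ρ : Execution V P r) : ℕ :=
  ∑ i ∈ (Finset.range r).filter (fun i => ρ.ty i = StepType.reconf),
    dist (ρ.cfg i) (ρ.cfg (i + 1))

/-- An execution is `k`-balanced if it starts and ends with a communication step
and `nbreconfig ρ ≤ k * (nbcomm ρ - 1)`. -/
def Execution.Balanced (k : ℕ) (ρ : Execution V P r) : Prop :=
  1 ≤ r ∧ ρ.ty 0 = StepType.comm ∧ ρ.ty (r - 1) = StepType.comm ∧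
    ρ.nbreconfig ≤ k * (ρ.nbcomm - 1)

/-- Juxtaposition `G ⊕ H` of two configurations: disjoint union. -/
def Config.juxt {V W Q : Type} (G : Config V Q) (H : Config W Q) : Config (V ⊕ W) Q where
  graph := SimpleGraph.fromEdgeSet
    (Sym2.map Sum.inl '' G.graph.edgeSet ∪ Sym2.map Sum.inr '' H.graph.edgeSet)
  label := Sum.elim G.label H.label

/-- `G ^ N`: juxtaposition of `N` disjoint copies of `G`. -/
def Config.pow {V Q : Type} (G : Config V Q) (N : ℕ) : Config (V × Fin N) Q where
  graph := SimpleGraph.fromEdgeSet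
    (⋃ i : Fin N, Sym2.map (fun v => (v, i)) '' G.graph.edgeSet)
  label := fun p => G.label p.1

/-- Renaming the nodes of a configuration along a bijection. -/
def Config.rename {V W Q : Type} (e : V ≃ W) (G : Config V Q) : Config W Q where
  graph := SimpleGraph.comap e.symm G.graph
  label := G.label ∘ e.symm


variable {Q M V : Type} {P : BroadcastProtocol Q M} {r : ℕ}

/-- `κ(ρ)`: the total number of repeated atomic reconfigurations of `ρ`, i.e. the sum,
over the reconfiguration steps of `ρ`, of `max(d(G_i, G_{i+1}) - 1, 0)`. -/
noncomputable def Execution.kappa (ρ : Execution V P r) : ℕ :=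
  ∑ i ∈ (Finset.range r).filter (fun i => ρ.ty i = StepType.reconf),
    (dist (ρ.cfg i) (ρ.cfg (i + 1)) - 1)

/-!
The run of `ρ` from `G_1` to `G_n` is a sequence of rounds, each a reconfiguration of `d` edges
followed by a communication step. In a copy of `G_1`, such a round is replayed as `d` atomic
reconfigurations; each of the first `d - 1` is followed by the final communication step
`G_{n-1} → G_n` performed in a fresh copy of `G_{n-1}`, the last one by the round's own
communication step. A copy of `G_1` thus reaches `G_n` while turning `κ` copies of `G_{n-1}` into
copies of `G_n`, and treating the `N` copies of `G_1` one after the other uses up all `κN` copies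
of `G_{n-1}`.
-/

@[ext]
theorem Config.ext {V Q : Type} {G H : Config V Q} (hg : G.graph = H.graph)
    (hl : G.label = H.label) : G = H := by
  cases G; cases H; cases hg; cases hl; rfl

theorem _root_.SimpleGraph.edgeSet_symmDiff {V : Type} (G H : SimpleGraph V) :
    (symmDiff G H).edgeSet = symmDiff G.edgeSet H.edgeSet := by
  simp only [symmDiff_def, SimpleGraph.edgeSet_sup, SimpleGraph.edgeSet_sdiff]
  rfl

theorem dist_eq_ncard_edgeSet_symmDiff {V Q : Type} (G G' : Config V Q) :
    dist G G' = (symmDiff G.graph G'.graph).edgeSet.ncard := by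
  rw [dist, SimpleGraph.edgeSet_symmDiff]

section Rename

variable {V W Q M : Type} (e : V ≃ W)

@[simp]
theorem Config.rename_adj (G : Config V Q) (x y : W) :
    (G.rename e).graph.Adj x y ↔ G.graph.Adj (e.symm x) (e.symm y) := Iff.rfl

@[simp]
theorem Config.rename_label (G : Config V Q) (x : W) :
    (G.rename e).label x = G.label (e.symm x) := rfl

theorem Config.rename_trans {U : Type} (e' : W ≃ U) (G : Config V Q) :
    G.rename (e.trans e') = (G.rename e).rename e' := rfl

theorem dist_rename (G G' : Config V Q) : dist (G.rename e) (G'.rename e) = dist G G' := by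
  have key : symmDiff (G.rename e).graph (G'.rename e).graph =
      (symmDiff G.graph G'.graph).map e.toEmbedding := by
    rw [← SimpleGraph.comap_symm]
    ext x y
    simp [symmDiff_def]
  rw [dist_eq_ncard_edgeSet_symmDiff, dist_eq_ncard_edgeSet_symmDiff, key,
    SimpleGraph.edgeSet_map, Set.ncard_image_of_injective _ e.toEmbedding.sym2Map.injective]

theorem ReconfStep.rename {G G' : Config V Q} (h : ReconfStep G G') :
    ReconfStep (G.rename e) (G'.rename e) := by
  unfold ReconfStep at *
  ext x
  simp [h]

theorem CommStep.rename {P : BroadcastProtocol Q M} {G G' : Config V Q} (h : CommStep P G G') :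
    CommStep P (G.rename e) (G'.rename e) := by
  obtain ⟨hgraph, v, m, hbrd, hrcv, hrest⟩ := h
  refine ⟨by simp [Config.rename, hgraph], e v, m, by simpa using hbrd, fun u hu => ?_,
    fun u hne hu => ?_⟩
  · simpa using hrcv _ (by simpa using hu)
  · simpa using hrest (e.symm u) (by simpa [Equiv.symm_apply_eq] using hne) (by simpa using hu)

end Rename

section IJuxt

variable {V Q ι : Type}

def Config.iJuxt (F : ι → Config V Q) : Config (V × ι) Q where
  graph :=
    { Adj := fun p q => p.2 = q.2 ∧ (F p.2).graph.Adj p.1 q.1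
      symm := ⟨fun _ _ ⟨h, hadj⟩ => ⟨h.symm, h ▸ hadj.symm⟩⟩
      loopless := ⟨fun _ ⟨_, hadj⟩ => hadj.ne rfl⟩ }
  label := fun p => (F p.2).label p.1

@[simp]
theorem Config.iJuxt_adj (F : ι → Config V Q) (p q : V × ι) :
    (Config.iJuxt F).graph.Adj p q ↔ p.2 = q.2 ∧ (F p.2).graph.Adj p.1 q.1 := Iff.rfl

@[simp]
theorem Config.iJuxt_label (F : ι → Config V Q) (p : V × ι) :
    (Config.iJuxt F).label p = (F p.2).label p.1 := rfl

theorem Config.pow_eq_iJuxt (G : Config V Q) (N : ℕ) :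
    G.pow N = Config.iJuxt (fun _ : Fin N => G) := by
  ext ⟨a, i⟩ ⟨b, j⟩
  · simp only [Config.pow, SimpleGraph.fromEdgeSet_adj, Set.mem_iUnion, Set.mem_image,
      Sym2.exists, Sym2.map_mk, Sym2.eq_iff, Prod.mk.injEq, SimpleGraph.mem_edgeSet,
      Config.iJuxt_adj]
    constructor
    · rintro ⟨⟨k, u, w, huw, ⟨⟨rfl, rfl⟩, rfl, rfl⟩ | ⟨⟨rfl, rfl⟩, rfl, rfl⟩⟩, -⟩
      exacts [⟨rfl, huw⟩, ⟨rfl, huw.symm⟩]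
    · rintro ⟨rfl, h⟩
      exact ⟨⟨i, a, b, h, Or.inl ⟨⟨rfl, rfl⟩, rfl, rfl⟩⟩, fun hab => h.ne (congrArg Prod.fst hab)⟩
  · rfl

theorem Config.juxt_iJuxt {α β : Type} (F : α → Config V Q) (F' : β → Config V Q) :
    (Config.iJuxt F).juxt (Config.iJuxt F') =
      (Config.iJuxt (Sum.elim F F')).rename (Equiv.prodSumDistrib V α β) := by
  ext x y
  · rcases x with ⟨a, i⟩ | ⟨a, i⟩ <;> rcases y with ⟨b, j⟩ | ⟨b, j⟩ <;>
      simp [Config.juxt, SimpleGraph.fromEdgeSet_adj, Sym2.exists]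
    all_goals
      constructor
      · rintro ⟨⟨u, k, w, huw, ⟨⟨rfl, rfl⟩, rfl, rfl⟩ | ⟨⟨rfl, rfl⟩, rfl, rfl⟩⟩, -⟩
        exacts [⟨rfl, huw⟩, ⟨rfl, huw.symm⟩]
      · rintro ⟨rfl, h⟩
        exact ⟨⟨a, i, b, h, Or.inl ⟨⟨rfl, rfl⟩, rfl, rfl⟩⟩, fun hab => (h.ne hab).elim⟩
  · rcases x with ⟨v, a⟩ | ⟨v, b⟩ <;> rfl

theorem Config.iJuxt_rename_prodCongr {κ : Type} (σ : ι ≃ κ) (F : ι → Config V Q) :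
    (Config.iJuxt F).rename ((Equiv.refl V).prodCongr σ) = Config.iJuxt (F ∘ σ.symm) := by
  ext p q
  · simp [Equiv.prodCongr_symm]
  · simp

end IJuxt

section IJuxtUpdate

variable {V Q M ι : Type} [DecidableEq ι] {F : ι → Config V Q} {c : ι} {Y : Config V Q}

theorem ReconfStep.iJuxt_update (h : ReconfStep (F c) Y) :
    ReconfStep (Config.iJuxt F) (Config.iJuxt (Function.update F c Y)) := by
  unfold ReconfStep at *
  ext ⟨v, i⟩
  rcases eq_or_ne i c with rfl | hi
  · simp [h]
  · simp [hi]

theorem dist_iJuxt_update :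
    dist (Config.iJuxt F) (Config.iJuxt (Function.update F c Y)) = dist (F c) Y := by
  have key : symmDiff (Config.iJuxt F).graph (Config.iJuxt (Function.update F c Y)).graph =
      (symmDiff (F c).graph Y.graph).map (Function.Embedding.sectL V c) := by
    ext ⟨a, i⟩ ⟨b, j⟩
    rcases eq_or_ne i c with rfl | hi
    · simp [symmDiff_def]
      tauto
    · simp [symmDiff_def, hi, hi.symm]
  rw [dist_eq_ncard_edgeSet_symmDiff, dist_eq_ncard_edgeSet_symmDiff, key,
    SimpleGraph.edgeSet_map,
    Set.ncard_image_of_injective _ (Function.Embedding.sym2Map _).injective]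

theorem CommStep.iJuxt_update {P : BroadcastProtocol Q M} (h : CommStep P (F c) Y) :
    CommStep P (Config.iJuxt F) (Config.iJuxt (Function.update F c Y)) := by
  obtain ⟨hgraph, v, m, hbrd, hrcv, hrest⟩ := h
  refine ⟨?_, (v, c), m, by simpa using hbrd, fun ⟨u, i⟩ hu => ?_, fun ⟨u, i⟩ hne hu => ?_⟩
  · ext ⟨a, i⟩ ⟨b, j⟩
    rcases eq_or_ne i c with rfl | hi
    · simp [hgraph]
    · simp [hi]
  · obtain ⟨rfl, hu⟩ := hu
    simpa using hrcv u hu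
  · rcases eq_or_ne i c with rfl | hi
    · simpa using hrest u (by simpa using hne) (by simpa using hu)
    · simp [hi]

end IJuxtUpdate

section UnitRound

variable {W Q M : Type} {P : BroadcastProtocol Q M}

def UnitRound (P : BroadcastProtocol Q M) (G H : Config W Q) : Prop :=
  ∃ G', ReconfStep G G' ∧ dist G G' ≤ 1 ∧ CommStep P G' H

theorem UnitRound.rename {W' : Type} (e : W ≃ W') {G H : Config W Q} (h : UnitRound P G H) :
    UnitRound P (G.rename e) (H.rename e) :=
  let ⟨G', hrec, hd, hcomm⟩ := h
  ⟨G'.rename e, hrec.rename e, (dist_rename e G G').trans_le hd, hcomm.rename e⟩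

theorem unitRound_iJuxt_update {V ι : Type} [DecidableEq ι] {F : ι → Config V Q} {c j : ι}
    {Y Z : Config V Q} (hrec : ReconfStep (F c) Y) (hd : dist (F c) Y ≤ 1)
    (hcomm : CommStep P (Function.update F c Y j) Z) :
    UnitRound P (Config.iJuxt F)
      (Config.iJuxt (Function.update (Function.update F c Y) j Z)) :=
  ⟨_, hrec.iJuxt_update, dist_iJuxt_update.trans_le hd, hcomm.iJuxt_update⟩

def roundType (i : ℕ) : StepType := if Even i then .reconf else .comm

theorem roundType_add_two (i : ℕ) : roundType (i + 2) = roundType i := by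
  simp [roundType, Nat.even_add]

theorem exists_kConstrained_execution_of_reflTransGen {G H : Config W Q}
    (h : Relation.ReflTransGen (UnitRound P) G H) :
    ∃ (len : ℕ) (ρ : Execution W P len), ρ.KConstrained 1 ∧ ρ.cfg 0 = G ∧ ρ.cfg len = H := by
  suffices ∃ (len : ℕ) (ρ : Execution W P len), ρ.ty = roundType ∧ ρ.KConstrained 1 ∧
      ρ.cfg 0 = G ∧ ρ.cfg len = H from
    let ⟨len, ρ, _, hρ⟩ := this
    ⟨len, ρ, hρ⟩
  induction h using Relation.ReflTransGen.head_induction_on with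
  | refl =>
    exact ⟨0, ⟨fun _ => H, roundType, by simp, by simp, by simp⟩, rfl,
      fun _ hi => absurd hi (by simp), rfl, rfl⟩
  | head hround _ ih =>
    obtain ⟨G₁, hrec, hd, hcomm⟩ := hround
    obtain ⟨len, ρ, hty, hk, h0, hlen⟩ := ih
    have hty' : ∀ i, ρ.ty i = roundType (i + 2) := by simp [hty, roundType_add_two]
    refine ⟨len + 2,
      { cfg := fun | 0 => _ | 1 => G₁ | i + 2 => ρ.cfg i
        ty := roundType
        step_comm := fun
          | 0, _, h => by simp [roundType] at h
          | 1, _, _ => by simpa [h0] using hcomm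
          | i + 2, hi, h => ρ.step_comm i (by omega) (by rwa [hty'])
        step_reconf := fun
          | 0, _, _ => hrec
          | 1, _, h => by simp [roundType] at h
          | i + 2, hi, h => ρ.step_reconf i (by omega) (by rwa [hty'])
        alternate := fun i _ => by
          simp only [roundType, Nat.even_add_one]
          split_ifs <;> simp_all }, rfl, ?_, rfl, hlen⟩
    rintro (_ | _ | i) hi h
    · exact hd
    · simp [roundType] at h
    · exact hk i (by omega) (by rwa [hty'])

end UnitRound

theorem exists_reconfStep_dist_one {V Q : Type} {X Y : Config V Q} (hd : dist X Y ≠ 0) :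
    ∃ X', ReconfStep X X' ∧ dist X X' = 1 ∧ dist X' Y = dist X Y - 1 := by
  rw [dist] at hd
  obtain ⟨e, he⟩ := Set.nonempty_of_ncard_ne_zero hd
  have hdiag : ¬ e.IsDiag := by
    rcases he with ⟨he, -⟩ | ⟨he, -⟩
    exacts [X.graph.not_isDiag_of_mem_edgeSet he, Y.graph.not_isDiag_of_mem_edgeSet he]
  let X' : Config V Q := ⟨symmDiff X.graph (SimpleGraph.fromEdgeSet {e}), X.label⟩
  have hX' : X'.graph.edgeSet = symmDiff X.graph.edgeSet {e} := by
    simp [X', SimpleGraph.edgeSet_symmDiff, hdiag]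
  refine ⟨X', rfl, ?_, ?_⟩
  · rw [dist, hX', symmDiff_symmDiff_cancel_left, Set.ncard_singleton]
  · rw [dist, dist, hX', symmDiff_right_comm, symmDiff_of_ge (Set.singleton_subset_iff.2 he),
      Set.ncard_sdiff_singleton_of_mem he]

inductive RoundPath {V Q M : Type} (P : BroadcastProtocol Q M) :
    ℕ → Config V Q → Config V Q → Prop
  | refl (G : Config V Q) : RoundPath P 0 G G
  | head {X Y Z H : Config V Q} {k : ℕ} :
      ReconfStep X Y → CommStep P Y Z → RoundPath P k Z H → RoundPath P (dist X Y - 1 + k) X H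

theorem StepType.eq_comm_of_ne_reconf {t : StepType} (h : t ≠ .reconf) : t = .comm := by
  cases t <;> simp_all

theorem StepType.eq_reconf_of_ne_comm {t : StepType} (h : t ≠ .comm) : t = .reconf := by
  cases t <;> simp_all

namespace Execution

noncomputable def kappaFrom (ρ : Execution V P r) (j : ℕ) : ℕ :=
  ∑ i ∈ (Finset.Ico j r).filter (fun i => ρ.ty i = StepType.reconf),
    (dist (ρ.cfg i) (ρ.cfg (i + 1)) - 1)

theorem kappa_eq_kappaFrom_zero (ρ : Execution V P r) : ρ.kappa = ρ.kappaFrom 0 := by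
  rw [kappa, kappaFrom, Finset.range_eq_Ico]

theorem kappaFrom_self (ρ : Execution V P r) : ρ.kappaFrom r = 0 := by
  simp [kappaFrom]

theorem kappaFrom_eq_add (ρ : Execution V P r) {j : ℕ} (hj : j < r) :
    ρ.kappaFrom j = (if ρ.ty j = .reconf then dist (ρ.cfg j) (ρ.cfg (j + 1)) - 1 else 0) +
      ρ.kappaFrom (j + 1) := by
  rw [kappaFrom, kappaFrom, ← Finset.insert_Ico_add_one_left_eq_Ico hj, Finset.filter_insert]
  split_ifs
  · rw [Finset.sum_insert (by simp)]
  · rw [Nat.zero_add]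

theorem roundPath_kappaFrom (ρ : Execution V P r) (hlast : ρ.ty (r - 1) = .comm) {j : ℕ}
    (hj : j ≤ r) (hty : j < r → ρ.ty j = .reconf) :
    RoundPath P (ρ.kappaFrom j) (ρ.cfg j) (ρ.cfg r) := by
  rcases hj.eq_or_lt with rfl | hjr
  · rw [kappaFrom_self]
    exact .refl _
  have hj : ρ.ty j = .reconf := hty hjr
  have hj1 : j + 1 < r := by
    by_contra h
    rw [show j = r - 1 by omega, hlast] at hj
    exact StepType.noConfusion hj
  have hcomm : ρ.ty (j + 1) = .comm :=
    StepType.eq_comm_of_ne_reconf (hj ▸ ρ.alternate j hj1)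
  have hsplit : ρ.kappaFrom j = (dist (ρ.cfg j) (ρ.cfg (j + 1)) - 1) + ρ.kappaFrom (j + 2) := by
    rw [ρ.kappaFrom_eq_add hjr, ρ.kappaFrom_eq_add hj1, if_pos hj, hcomm]
    simp
  rw [hsplit]
  exact .head (ρ.step_reconf j hjr hj) (ρ.step_comm (j + 1) hj1 hcomm)
    (ρ.roundPath_kappaFrom hlast (by omega) fun h =>
      StepType.eq_reconf_of_ne_comm (hcomm ▸ ρ.alternate (j + 1) h))
termination_by r - j

theorem Balanced.roundPath_kappa {k : ℕ} {ρ : Execution V P r} (hbal : ρ.Balanced k) :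
    RoundPath P ρ.kappa (ρ.cfg 1) (ρ.cfg r) := by
  obtain ⟨hr, hfirst, hlast, -⟩ := hbal
  have hκ : ρ.kappa = ρ.kappaFrom 1 := by
    rw [kappa_eq_kappaFrom_zero, ρ.kappaFrom_eq_add (by omega), hfirst]
    simp
  rw [hκ]
  exact ρ.roundPath_kappaFrom hlast hr fun h =>
    StepType.eq_reconf_of_ne_comm (hfirst ▸ ρ.alternate 0 h)

end Execution

section Simulation

open Relation

variable {V Q M ι : Type} [DecidableEq ι] {P : BroadcastProtocol Q M} {B B' : Config V Q}

theorem reflTransGen_unitRound_of_reconf_comm {F : ι → Config V Q} {c : ι} {S : Finset ι}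
    {Y Z : Config V Q} (hBB' : CommStep P B B') (hpool : ∀ j ∈ S, F j = B) (hc : c ∉ S)
    (hS : S.card = dist (F c) Y - 1) (hY : ReconfStep (F c) Y) (hZ : CommStep P Y Z) :
    ReflTransGen (UnitRound P) (Config.iJuxt F)
      (Config.iJuxt (Function.update (S.piecewise (fun _ => B') F) c Z)) := by
  induction S using Finset.induction_on generalizing F with
  | empty =>
    have hround := unitRound_iJuxt_update (j := c) hY (by simp at hS; omega) (by simpa using hZ)
    simpa using ReflTransGen.single hround
  | @insert j S hj ih =>
    have hjc : j ≠ c := fun h => hc (h ▸ Finset.mem_insert_self j S)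
    obtain ⟨X', hX', hdX', hdY⟩ := exists_reconfStep_dist_one (X := F c) (Y := Y)
      (by rw [Finset.card_insert_of_notMem hj] at hS; omega)
    have hround := unitRound_iJuxt_update (c := c) (j := j) hX' hdX'.le
      (by simpa [hjc, hpool j (Finset.mem_insert_self j S)] using hBB')
    refine ReflTransGen.head hround ?_
    convert ih (F := Function.update (Function.update F c X') j B')
      (fun i hi => ?_) (fun h => hc (Finset.mem_insert_of_mem h)) ?_ ?_ using 2
    · funext i
      by_cases hic : i = c <;> by_cases hij : i = j <;> by_cases hiS : i ∈ S <;> simp_all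
    · have hij : i ≠ j := fun h => hj (h ▸ hi)
      have hic : i ≠ c := fun h => hc (Finset.mem_insert_of_mem (h ▸ hi))
      simp [hij, hic, hpool i (Finset.mem_insert_of_mem hi)]
    · rw [Finset.card_insert_of_notMem hj] at hS
      simp [hjc.symm, hdY]
      omega
    · simpa [hjc.symm, ReconfStep] using hY.trans hX'.symm

theorem RoundPath.reflTransGen_unitRound_update {k : ℕ} {X H B B' : Config V Q}
    (hpath : RoundPath P k X H) (hBB' : CommStep P B B') {F : ι → Config V Q} {c : ι}
    {S : Finset ι} (hFc : F c = X) (hpool : ∀ j ∈ S, F j = B) (hc : c ∉ S) (hS : S.card = k) :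
    ReflTransGen (UnitRound P) (Config.iJuxt F)
      (Config.iJuxt (Function.update (S.piecewise (fun _ => B') F) c H)) := by
  induction hpath generalizing F S with
  | refl G =>
    obtain rfl : S = ∅ := Finset.card_eq_zero.1 hS
    simpa [← hFc] using ReflTransGen.refl
  | @head X Y Z H k hY hZ _ ih =>
    obtain ⟨S₁, hS₁, hcard₁⟩ := Finset.exists_subset_card_eq (s := S) (n := dist X Y - 1) (by omega)
    have hc₁ : c ∉ S₁ := fun h => hc (hS₁ h)
    refine (reflTransGen_unitRound_of_reconf_comm hBB' (fun j hj => hpool j (hS₁ hj)) hc₁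
      (by rw [hFc, hcard₁]) (hFc ▸ hY) hZ).trans ?_
    convert ih (F := Function.update (S₁.piecewise (fun _ => B') F) c Z) (S := S \ S₁) (by simp)
      (fun j hj => ?_) (fun h => hc (Finset.sdiff_subset h)) ?_ using 2
    · funext i
      have := @hS₁ i
      by_cases hic : i = c <;> by_cases hi₁ : i ∈ S₁ <;> by_cases hi : i ∈ S <;> simp_all
    · obtain ⟨hjS, hj₁⟩ := Finset.mem_sdiff.1 hj
      have hjc : j ≠ c := fun h => hc (h ▸ hjS)
      simp [hjc, hj₁, hpool j hjS]
    · rw [Finset.card_sdiff_of_subset hS₁]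
      omega

theorem RoundPath.reflTransGen_unitRound_piecewise {k : ℕ} {X Z B : Config V Q}
    (hpath : RoundPath P k X Z) (hBZ : CommStep P B Z) {F : ι → Config V Q} {C S : Finset ι}
    (hdisj : Disjoint C S) (hcopies : ∀ c ∈ C, F c = X) (hpool : ∀ j ∈ S, F j = B)
    (hS : S.card = k * C.card) :
    ReflTransGen (UnitRound P) (Config.iJuxt F)
      (Config.iJuxt ((C ∪ S).piecewise (fun _ => Z) F)) := by
  induction C using Finset.induction_on generalizing F S with
  | empty =>
    obtain rfl : S = ∅ := Finset.card_eq_zero.1 (by simpa using hS)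
    convert ReflTransGen.refl
    funext i
    simp
  | @insert c C hcC ih =>
    rw [Finset.card_insert_of_notMem hcC] at hS
    obtain ⟨S₁, hS₁, hcard₁⟩ := Finset.exists_subset_card_eq (s := S) (n := k)
      (by rw [hS]; exact Nat.le_mul_of_pos_right k (Nat.succ_pos _))
    have hcS : c ∉ S := Finset.disjoint_left.1 hdisj (Finset.mem_insert_self c C)
    refine (hpath.reflTransGen_unitRound_update hBZ (hcopies c (Finset.mem_insert_self c C))
      (fun j hj => hpool j (hS₁ hj)) (fun h => hcS (hS₁ h)) hcard₁).trans ?_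
    convert ih (F := Function.update (S₁.piecewise (fun _ => Z) F) c Z) (S := S \ S₁)
      ((Finset.disjoint_insert_left.1 hdisj).2.mono_right Finset.sdiff_subset)
      (fun i hi => ?_) (fun j hj => ?_) ?_ using 2
    · funext i
      have := @hS₁ i
      by_cases hic : i = c <;> by_cases hi₁ : i ∈ S₁ <;> by_cases hi : i ∈ S <;>
        by_cases hiC : i ∈ C <;> simp_all
    · have hic : i ≠ c := fun h => hcC (h ▸ hi)
      have hiS : i ∉ S := Finset.disjoint_left.1 hdisj (Finset.mem_insert_of_mem hi)
      have hi₁ : i ∉ S₁ := fun h => hiS (hS₁ h)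
      simp [hic, hi₁, hcopies i (Finset.mem_insert_of_mem hi)]
    · obtain ⟨hjS, hj₁⟩ := Finset.mem_sdiff.1 hj
      have hjc : j ≠ c := fun h => hcS (h ▸ hjS)
      simp [hjc, hj₁, hpool j hjS]
    · rw [Finset.card_sdiff_of_subset hS₁, hS, hcard₁, Nat.mul_succ, Nat.add_sub_cancel]

end Simulation

/-- Lemma on the final phase.
For every `1`-balanced execution `ρ = (G_i)_{0 ≤ i ≤ n}` with `κ = κ(ρ)` its total
number of repeated atomic reconfigurations, and every `N`, there is a `1`-constrained
execution from `G_1^N ⊕ G_{n-1}^{κN}` to `G_n^{N + κN}`. -/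
theorem end_phase_lemma {n : ℕ} (ρ : Execution V P n) (hbal : ρ.Balanced 1)
    (κ : ℕ) (hκ : κ = ρ.kappa) :
    ∀ N : ℕ,
      ∃ (r' : ℕ) (ρ' : Execution ((V × Fin N) ⊕ (V × Fin (κ * N))) P r'),
        ρ'.KConstrained 1 ∧
        ρ'.cfg 0 = Config.juxt ((ρ.cfg 1).pow N) ((ρ.cfg (n - 1)).pow (κ * N)) ∧
        ρ'.cfg r' = Config.rename
          (((Equiv.refl V).prodCongr finSumFinEquiv.symm).trans
            (Equiv.prodSumDistrib V (Fin N) (Fin (κ * N))))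
          ((ρ.cfg n).pow (N + κ * N)) := by
  intro N
  have hpath : RoundPath P κ (ρ.cfg 1) (ρ.cfg n) := hκ ▸ hbal.roundPath_kappa
  obtain ⟨hn, -, hlastTy, -⟩ := hbal
  have hlast : CommStep P (ρ.cfg (n - 1)) (ρ.cfg n) := by
    simpa [Nat.sub_add_cancel hn] using ρ.step_comm (n - 1) (by omega) hlastTy
  have hrun := hpath.reflTransGen_unitRound_piecewise hlast
    (F := Sum.elim (fun _ : Fin N => ρ.cfg 1) (fun _ : Fin (κ * N) => ρ.cfg (n - 1)))
    (C := Finset.univ.map .inl) (S := Finset.univ.map .inr)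
    (Finset.disjoint_map_inl_map_inr _ _) (by simp) (by simp) (by simp)
  obtain ⟨r', ρ', hk, h0, hr'⟩ := exists_kConstrained_execution_of_reflTransGen
    (hrun.lift _ fun _ _ h => h.rename (Equiv.prodSumDistrib V (Fin N) (Fin (κ * N))))
  refine ⟨r', ρ', hk, ?_, ?_⟩
  · rw [h0, Config.pow_eq_iJuxt, Config.pow_eq_iJuxt, Config.juxt_iJuxt]
  · rw [hr', Config.rename_trans, Config.pow_eq_iJuxt, Config.iJuxt_rename_prodCongr]
    congr 2
    funext c
    rcases c with i | i <;> simp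

end RBN
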